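/- arXiv:1006.1538 — 2 statements merged into one kernel-verified Lean document; each statement's English description precedes it below -/
import Mathlib

section
/- In the small-coupling setting (u ≡ 0, b̃_n = b⁰_n + t v_n), for every λ ∈ ℂ the coefficient of t¹ in the polynomial t ↦ A(λ,t) vanishes, i.e. ∂A/∂t(λ,0) = 0; consequently A(λ,t) = O(t²) as t → 0. -/
/-!
With `W(y, z)(n) = aₙ (yₙ zₙ₊₁ - yₙ₊₁ zₙ)`, two solutions of the recurrence with potentials `b'`
and `b` satisfy `W(n) - W(n-1) = (b'ₙ - bₙ) yₙ zₙ`; in particular `W(θ, φ) ≡ a₀`. Since the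
perturbed solutions coincide with `θ, φ` above `p`, telescoping the Wronskians `W(θ̃, φ)` and
`W(θ, φ̃)` from `n = -1` up to `p + 1` gives
`2 a₀ A(λ, t) = t ∑_{i ≤ p+1} vᵢ (φ̃ᵢ θᵢ - θ̃ᵢ φᵢ)`.
Solving the recurrence downwards shows that the sum depends differentiably on `t`, and it vanishes
at `t = 0` because there `θ̃ = θ` and `φ̃ = φ`. Hence `A(λ, t) = O(t²)`.
-/

open Polynomial Asymptotics Filter Topology

theorem Int.induction_down_two_step {P : ℤ → Prop} (p : ℤ) (htop : ∀ n, p < n → P n)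
    (hstep : ∀ n, P (n + 1) → P (n + 2) → P n) (n : ℤ) : P n := by
  have key : ∀ m ≤ p + 1, P m ∧ P (m + 1) := by
    intro m hm
    induction m, hm using Int.leInductionDown with
    | base => exact ⟨htop _ (by omega), htop _ (by omega)⟩
    | pred m _ ih =>
      have h1 : P (m - 1 + 1) := by simpa using ih.1
      have h2 : P (m - 1 + 2) := by rw [show m - 1 + 2 = m + 1 by ring]; exact ih.2
      exact ⟨hstep _ h1 h2, h1⟩
  rcases le_or_gt n (p + 1) with hn | hn
  · exact (key n hn).1
  · exact htop n (by omega)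

def IsJacobiSolution {R : Type*} [CommRing R] (a b : ℤ → R) (x : R) (y : ℤ → R) : Prop :=
  ∀ n, a (n - 1) * y (n - 1) + a n * y (n + 1) + b n * y n = x * y n

def jacobiWronskian {R : Type*} [CommRing R] (a y z : ℤ → R) (n : ℤ) : R :=
  a n * (y n * z (n + 1) - y (n + 1) * z n)

namespace IsJacobiSolution

section CommRing

variable {R : Type*} [CommRing R] {a b c : ℤ → R} {x : R} {y z : ℤ → R}

theorem aeval {S A : Type*} [CommRing S] [CommRing A] [Algebra S A] {a b : ℤ → S}
    {y : ℤ → S[X]} (hy : IsJacobiSolution (fun n => C (a n)) (fun n => C (b n)) X y) (x : A) :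
    IsJacobiSolution (fun n => algebraMap S A (a n)) (fun n => algebraMap S A (b n)) x
      (fun n => Polynomial.aeval x (y n)) := by
  intro n
  simpa using congrArg (Polynomial.aeval x) (hy n)

theorem jacobiWronskian_sub_sub_one (hy : IsJacobiSolution a b x y)
    (hz : IsJacobiSolution a c x z) (n : ℤ) :
    jacobiWronskian a y z n - jacobiWronskian a y z (n - 1) = (b n - c n) * y n * z n := by
  unfold jacobiWronskian
  rw [sub_add_cancel]
  linear_combination y n * hz n - z n * hy n

theorem jacobiWronskian_telescope (hy : IsJacobiSolution a b x y)
    (hz : IsJacobiSolution a c x z) (N : ℕ) :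
    jacobiWronskian a y z (N - 1) - jacobiWronskian a y z (-1) =
      ∑ i ∈ Finset.range N, (b i - c i) * y i * z i := by
  have := Finset.sum_range_sub (fun i : ℕ => jacobiWronskian a y z ((i : ℤ) - 1)) N
  simp only [Nat.cast_add, Nat.cast_one, add_sub_cancel_right, Nat.cast_zero, zero_sub] at this
  rw [← this]
  exact Finset.sum_congr rfl fun i _ => jacobiWronskian_sub_sub_one hy hz i

theorem jacobiWronskian_eq_of_eq_above {b' y' : ℤ → R} (hy' : IsJacobiSolution a b' x y')
    (hy : IsJacobiSolution a b x y) (hz : IsJacobiSolution a b x z) (p : ℕ)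
    (hy'y : ∀ n : ℤ, p < n → y' n = y n) :
    jacobiWronskian a y' z (-1) =
      jacobiWronskian a y z (-1) - ∑ i ∈ Finset.range (p + 2), (b' i - b i) * y' i * z i := by
  have htop : jacobiWronskian a y' z (p + 1) = jacobiWronskian a y z (p + 1) := by
    simp only [jacobiWronskian, hy'y (p + 1) (by omega), hy'y (p + 1 + 1) (by omega)]
  have h' := jacobiWronskian_telescope hy' hz (p + 2)
  have h := jacobiWronskian_telescope hy hz (p + 2)
  simp only [sub_self, zero_mul, Finset.sum_const_zero] at h
  push_cast at h h'
  rw [show (p : ℤ) + 2 - 1 = p + 1 by ring] at h h'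
  linear_combination htop - h' + h

theorem fundamental_perturbation_identity {b' θ φ θ' φ' : ℤ → R}
    (hθ : IsJacobiSolution a b x θ) (hφ : IsJacobiSolution a b x φ)
    (hθ' : IsJacobiSolution a b' x θ') (hφ' : IsJacobiSolution a b' x φ')
    (hθ0 : θ 0 = 1) (hθ1 : θ 1 = 0) (hφ0 : φ 0 = 0) (hφ1 : φ 1 = 1) (p : ℕ)
    (hθ'θ : ∀ n : ℤ, p < n → θ' n = θ n) (hφ'φ : ∀ n : ℤ, p < n → φ' n = φ n) :
    a 0 * (φ' 1 - φ 1) + (b' 0 - b 0) * φ' 0 + a 0 * (θ' 0 - θ 0) =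
      ∑ i ∈ Finset.range (p + 2), (b' i - b i) * (φ' i * θ i - θ' i * φ i) := by
  have hW₁ := jacobiWronskian_eq_of_eq_above hθ' hθ hφ p hθ'θ
  have hW₂ := jacobiWronskian_eq_of_eq_above hφ' hφ hθ p hφ'φ
  have eθ := hθ 0
  have eφ := hφ 0
  have eφ' := hφ' 0
  simp only [jacobiWronskian, zero_sub, zero_add, show (-1 : ℤ) + 1 = 0 by norm_num,
    hθ0, hθ1, hφ0, hφ1] at hW₁ hW₂ eθ eφ eφ' ⊢
  have hsum : ∑ i ∈ Finset.range (p + 2), (b' i - b i) * (φ' i * θ i - θ' i * φ i) =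
      ∑ i ∈ Finset.range (p + 2), (b' i - b i) * φ' i * θ i -
        ∑ i ∈ Finset.range (p + 2), (b' i - b i) * θ' i * φ i := by
    rw [← Finset.sum_sub_distrib]
    exact Finset.sum_congr rfl fun i _ => by ring
  linear_combination hW₁ - hW₂ + eφ' - φ' 0 * eθ + (θ' 0 - 2) * eφ - hsum

theorem eq_of_eq_above [IsDomain R] (hy : IsJacobiSolution a b x y)
    (hz : IsJacobiSolution a b x z) (ha : ∀ n, a n ≠ 0) (p : ℤ) (hyz : ∀ n, p < n → y n = z n) :
    y = z := by
  funext n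
  induction n using Int.induction_down_two_step p with
  | htop n hn => exact hyz n hn
  | hstep n h₁ h₂ =>
    have hy' := hy (n + 1)
    have hz' := hz (n + 1)
    rw [add_sub_cancel_right, show n + 1 + 1 = n + 2 by ring] at hy' hz'
    refine mul_left_cancel₀ (ha n) ?_
    linear_combination hy' - hz' + (x - b (n + 1)) * h₁ - a (n + 1) * h₂

end CommRing

section Field

variable {K : Type*} [Field K] {a b : ℤ → K} {x : K} {y z : ℤ → K}

theorem eq_inv_mul (hy : IsJacobiSolution a b x y) {n : ℤ} (ha : a n ≠ 0) :
    y n = (a n)⁻¹ * ((x - b (n + 1)) * y (n + 1) - a (n + 1) * y (n + 2)) := by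
  have h := hy (n + 1)
  rw [add_sub_cancel_right, show n + 1 + 1 = n + 2 by ring] at h
  field_simp
  linear_combination h

end Field

theorem differentiable_of_differentiable_above {𝕜 : Type*} [NontriviallyNormedField 𝕜]
    [NormedAlgebra ℝ 𝕜] {a : ℤ → 𝕜} {b : ℝ → ℤ → 𝕜} {x : 𝕜} {y : ℝ → ℤ → 𝕜}
    (hy : ∀ t, IsJacobiSolution a (b t) x (y t)) (ha : ∀ n, a n ≠ 0)
    (hb : ∀ n, Differentiable ℝ fun t => b t n) (p : ℤ)
    (htop : ∀ n, p < n → Differentiable ℝ fun t => y t n) (n : ℤ) :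
    Differentiable ℝ fun t => y t n := by
  induction n using Int.induction_down_two_step p with
  | htop n hn => exact htop n hn
  | hstep n h₁ h₂ =>
    simp_rw [fun t => (hy t).eq_inv_mul (ha n)]
    have := hb (n + 1)
    fun_prop

end IsJacobiSolution

theorem differentiable_aeval_perturbed_solution {a b v : ℤ → ℝ} (ha : ∀ n, a n ≠ 0)
    {y : ℤ → ℝ[X]} {yt : ℝ → ℤ → ℝ[X]}
    (hyt : ∀ t, IsJacobiSolution (fun n => C (a n)) (fun n => C (b n + t * v n)) X (yt t))
    (p : ℤ) (hyty : ∀ t n, p < n → yt t n = y n) (lam : ℂ) (n : ℤ) :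
    Differentiable ℝ fun t => aeval lam (yt t n) := by
  refine IsJacobiSolution.differentiable_of_differentiable_above (fun t => (hyt t).aeval lam)
    (fun n => by simpa using ha n) (fun n => ?_) p (fun n hn => ?_) n
  · simp only [map_add, map_mul, Complex.coe_algebraMap]
    fun_prop
  · simp only [hyty _ n hn]
    exact differentiable_const _

theorem hasDerivAt_smul_zero {E : Type*} [NormedAddCommGroup E] [NormedSpace ℝ E] {g : ℝ → E}
    (hg : DifferentiableAt ℝ g 0) (hg0 : g 0 = 0) : HasDerivAt (fun t => t • g t) 0 0 := by
  have h := (hasDerivAt_id' (0 : ℝ)).smul hg.hasDerivAt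
  rwa [hg0, zero_smul, smul_zero, zero_add] at h

theorem isBigO_smul_sq {E : Type*} [NormedAddCommGroup E] [NormedSpace ℝ E] {g : ℝ → E}
    (hg : DifferentiableAt ℝ g 0) (hg0 : g 0 = 0) :
    (fun t => t • g t) =O[𝓝 0] fun t => t ^ 2 := by
  have h : g =O[𝓝 0] fun t => t := by simpa [hg0] using hg.isBigO_sub
  simpa [sq] using (isBigO_refl (fun t : ℝ => t) (𝓝 0)).smul h

theorem stmt13_general
    (a b : ℤ → ℝ)
    (ha_pos : ∀ n : ℤ, 0 < a n)
    (θ φ : ℤ → Polynomial ℝ)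
    (hθ_rec : ∀ n : ℤ,
      C (a (n - 1)) * θ (n - 1) + C (a n) * θ (n + 1) + C (b n) * θ n = X * θ n)
    (hφ_rec : ∀ n : ℤ,
      C (a (n - 1)) * φ (n - 1) + C (a n) * φ (n + 1) + C (b n) * φ n = X * φ n)
    (hθ0 : θ 0 = 1) (hθ1 : θ 1 = 0) (hφ0 : φ 0 = 0) (hφ1 : φ 1 = 1)
    (p : ℕ)
    (v : ℤ → ℝ)
    (θt φt : ℝ → ℤ → Polynomial ℝ)
    (hθt_rec : ∀ (t : ℝ) (n : ℤ),
      C (a (n - 1)) * θt t (n - 1) + C (a n) * θt t (n + 1)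
        + C (b n + t * v n) * θt t n = X * θt t n)
    (hφt_rec : ∀ (t : ℝ) (n : ℤ),
      C (a (n - 1)) * φt t (n - 1) + C (a n) * φt t (n + 1)
        + C (b n + t * v n) * φt t n = X * φt t n)
    (hθt_bc : ∀ (t : ℝ) (n : ℤ), (p:ℤ) < n → θt t n = θ n)
    (hφt_bc : ∀ (t : ℝ) (n : ℤ), (p:ℤ) < n → φt t n = φ n)
    (Af : ℂ → ℝ → ℂ)
    (hAf : ∀ (lam : ℂ) (t : ℝ), Af lam t = (2 : ℂ)⁻¹ *
      ((aeval lam (φt t 1) - aeval lam (φ 1))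
        + ((t * v 0 / a 0 : ℝ) : ℂ) * aeval lam (φt t 0)
        + (aeval lam (θt t 0) - aeval lam (θ 0)))) :
    ∀ lam : ℂ, HasDerivAt (fun t : ℝ => Af lam t) 0 0 ∧
      (fun t : ℝ => Af lam t) =O[nhds (0:ℝ)] (fun t : ℝ => t ^ 2) := by
  intro lam
  have ha n : a n ≠ 0 := (ha_pos n).ne'
  have hθ : IsJacobiSolution (fun n => C (a n)) (fun n => C (b n)) X θ := hθ_rec
  have hφ : IsJacobiSolution (fun n => C (a n)) (fun n => C (b n)) X φ := hφ_rec
  have hθt t : IsJacobiSolution (fun n => C (a n)) (fun n => C (b n + t * v n)) X (θt t) :=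
    hθt_rec t
  have hφt t : IsJacobiSolution (fun n => C (a n)) (fun n => C (b n + t * v n)) X (φt t) :=
    hφt_rec t
  have hC n : C (a n) ≠ 0 := C_ne_zero.mpr (ha n)
  have hθt0 : θt 0 = θ :=
    IsJacobiSolution.eq_of_eq_above (by simpa using hθt 0) hθ hC p (hθt_bc 0)
  have hφt0 : φt 0 = φ :=
    IsJacobiSolution.eq_of_eq_above (by simpa using hφt 0) hφ hC p (hφt_bc 0)
  set g : ℝ → ℂ := fun t => ∑ i ∈ Finset.range (p + 2), (v i : ℂ) *
    (aeval lam (φt t i) * aeval lam (θ i) - aeval lam (θt t i) * aeval lam (φ i)) with hg_def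
  have hAf_eq : (fun t => Af lam t) = fun t : ℝ => t • ((2 * a 0 : ℂ)⁻¹ * g t) := by
    funext t
    have h := IsJacobiSolution.fundamental_perturbation_identity (hθ.aeval lam)
      (hφ.aeval lam) ((hθt t).aeval lam) ((hφt t).aeval lam)
      (by simp [hθ0]) (by simp [hθ1]) (by simp [hφ0]) (by simp [hφ1]) p
      (fun n hn => by simp [hθt_bc t n hn]) (fun n hn => by simp [hφt_bc t n hn])
    simp only [map_add, map_mul, Complex.coe_algebraMap, add_sub_cancel_left, mul_assoc,
      ← Finset.mul_sum] at h
    have ha0 : (a 0 : ℂ) ≠ 0 := by exact_mod_cast ha 0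
    rw [hAf, Complex.real_smul, hg_def]
    push_cast
    field_simp
    linear_combination h
  have hθt_diff := differentiable_aeval_perturbed_solution ha hθt p hθt_bc lam
  have hφt_diff := differentiable_aeval_perturbed_solution ha hφt p hφt_bc lam
  have hG : DifferentiableAt ℝ (fun t => (2 * a 0 : ℂ)⁻¹ * g t) 0 := by fun_prop
  have hG0 : (2 * a 0 : ℂ)⁻¹ * g 0 = 0 := by simp [hg_def, hθt0, hφt0, mul_comm]
  rw [hAf_eq]
  exact ⟨hasDerivAt_smul_zero hG hG0, isBigO_smul_sq hG hG0⟩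

theorem stmt13
    (q : ℕ) (hq : 1 ≤ q)
    (a b : ℤ → ℝ)
    (ha_per : ∀ n : ℤ, a (n + (q : ℤ)) = a n)
    (hb_per : ∀ n : ℤ, b (n + (q : ℤ)) = b n)
    (ha_pos : ∀ n : ℤ, 0 < a n)
    (θ φ : ℤ → Polynomial ℝ)
    (hθ_rec : ∀ n : ℤ,
      C (a (n - 1)) * θ (n - 1) + C (a n) * θ (n + 1) + C (b n) * θ n = X * θ n)
    (hφ_rec : ∀ n : ℤ,
      C (a (n - 1)) * φ (n - 1) + C (a n) * φ (n + 1) + C (b n) * φ n = X * φ n)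
    (hθ0 : θ 0 = 1) (hθ1 : θ 1 = 0) (hφ0 : φ 0 = 0) (hφ1 : φ 1 = 1)
    (Δl : Polynomial ℝ) (hΔl : Δl = C ((2:ℝ)⁻¹) * (φ ((q:ℤ) + 1) + θ (q:ℤ)))
    (φh : Polynomial ℝ) (hφh : φh = C ((2:ℝ)⁻¹) * (φ ((q:ℤ) + 1) - θ (q:ℤ)))
    (p : ℕ) (hp : 1 ≤ p)
    (v : ℤ → ℝ)
    (hv_supp : ∀ n : ℤ, (n < 0 ∨ (p:ℤ) < n) → v n = 0)
    (hv0 : v 0 ≠ 0) (hvp : v (p:ℤ) ≠ 0)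
    (θt φt : ℝ → ℤ → Polynomial ℝ)
    (hθt_rec : ∀ (t : ℝ) (n : ℤ),
      C (a (n - 1)) * θt t (n - 1) + C (a n) * θt t (n + 1)
        + C (b n + t * v n) * θt t n = X * θt t n)
    (hφt_rec : ∀ (t : ℝ) (n : ℤ),
      C (a (n - 1)) * φt t (n - 1) + C (a n) * φt t (n + 1)
        + C (b n + t * v n) * φt t n = X * φt t n)
    (hθt_bc : ∀ (t : ℝ) (n : ℤ), (p:ℤ) < n → θt t n = θ n)
    (hφt_bc : ∀ (t : ℝ) (n : ℤ), (p:ℤ) < n → φt t n = φ n)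
    (Af : ℂ → ℝ → ℂ)
    (hAf : ∀ (lam : ℂ) (t : ℝ), Af lam t = (2 : ℂ)⁻¹ *
      ((aeval lam (φt t 1) - aeval lam (φ 1))
        + ((t * v 0 / a 0 : ℝ) : ℂ) * aeval lam (φt t 0)
        + (aeval lam (θt t 0) - aeval lam (θ 0)))) :
    ∀ lam : ℂ, HasDerivAt (fun t : ℝ => Af lam t) 0 0 ∧
      (fun t : ℝ => Af lam t) =O[nhds (0:ℝ)] (fun t : ℝ => t ^ 2) :=
  stmt13_general a b ha_pos θ φ hθ_rec hφ_rec hθ0 hθ1 hφ0 hφ1 p v θt φt hθt_rec hφt_rec hθt_bc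
    hφt_bc Af hAf
end

section
/- Let μ ∈ ℝ satisfy Δ(μ)² = 1 and φ_q(μ) = 0 (a Dirichlet eigenvalue lying at a band edge). Then J_1(μ) = (θ_{q+1}(μ)/a⁰_0)·Σ_{k=1}^{p} v_k·φ_k(μ)², where J_1(λ) = −(1/a⁰_0)·Σ_{k=0}^{p} v_k·(φ_q(λ)θ_k(λ)² + 2φ̂(λ)θ_k(λ)φ_k(λ) − θ_{q+1}(λ)φ_k(λ)²). -/
/-!
The Casoratian `a_n (θ_n φ_{n+1} - θ_{n+1} φ_n)` of the two fundamental solutions is independent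
of `n`; comparing `n = q` with `n = 0` and using `a_q = a_0` gives
`θ_q φ_{q+1} - θ_{q+1} φ_q = 1`. At `μ` we have `φ_q = 0`, hence
`Δ² - φ̂² = θ_q φ_{q+1} = 1`, so the band-edge condition `Δ² = 1` forces `φ̂(μ) = 0`. Only the
`φ_k²` terms of `J_1(μ)` survive, and the `k = 0` one vanishes because `φ_0 = 0`.
-/

open Polynomial Asymptotics Filter

section Casoratian

variable {R : Type*} [CommRing R]

/-- The discrete Wronskian of `y` and `z` for the Jacobi operator with off-diagonal entries `a`. -/
def casoratian (a y z : ℤ → R) (n : ℤ) : R :=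
  a n * (y n * z (n + 1) - y (n + 1) * z n)

variable {a b y z : ℤ → R} {l : R}

theorem casoratian_add_one
    (hy : ∀ n, a (n - 1) * y (n - 1) + a n * y (n + 1) + b n * y n = l * y n)
    (hz : ∀ n, a (n - 1) * z (n - 1) + a n * z (n + 1) + b n * z n = l * z n) (n : ℤ) :
    casoratian a y z (n + 1) = casoratian a y z n := by
  have hy' := hy (n + 1)
  have hz' := hz (n + 1)
  simp only [add_sub_cancel_right] at hy' hz'
  unfold casoratian
  linear_combination y (n + 1) * hz' - z (n + 1) * hy'

theorem casoratian_eq_casoratian_zero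
    (hy : ∀ n, a (n - 1) * y (n - 1) + a n * y (n + 1) + b n * y n = l * y n)
    (hz : ∀ n, a (n - 1) * z (n - 1) + a n * z (n + 1) + b n * z n = l * z n) (n : ℤ) :
    casoratian a y z n = casoratian a y z 0 := by
  induction n using Int.induction_on with
  | zero => rfl
  | succ n ih => rw [casoratian_add_one hy hz, ih]
  | pred n ih => rw [← ih, ← casoratian_add_one hy hz, sub_add_cancel]

end Casoratian

theorem stmt18_general
    (q : ℕ)
    (a b : ℤ → ℝ)
    (ha_per : ∀ n : ℤ, a (n + (q : ℤ)) = a n)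
    (ha_pos : ∀ n : ℤ, 0 < a n)
    (θ φ : ℤ → Polynomial ℝ)
    (hθ_rec : ∀ n : ℤ,
      C (a (n - 1)) * θ (n - 1) + C (a n) * θ (n + 1) + C (b n) * θ n = X * θ n)
    (hφ_rec : ∀ n : ℤ,
      C (a (n - 1)) * φ (n - 1) + C (a n) * φ (n + 1) + C (b n) * φ n = X * φ n)
    (hθ0 : θ 0 = 1) (hθ1 : θ 1 = 0) (hφ0 : φ 0 = 0) (hφ1 : φ 1 = 1)
    (Δl : Polynomial ℝ) (hΔl : Δl = C ((2:ℝ)⁻¹) * (φ ((q:ℤ) + 1) + θ (q:ℤ)))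
    (φh : Polynomial ℝ) (hφh : φh = C ((2:ℝ)⁻¹) * (φ ((q:ℤ) + 1) - θ (q:ℤ)))
    (p : ℕ)
    (v : ℤ → ℝ)
    (J1 : ℝ → ℝ)
    (hJ1 : ∀ x : ℝ, J1 x = -(1 / a 0) * ∑ k ∈ Finset.range (p + 1), v (k : ℤ) *
      ((φ (q:ℤ)).eval x * ((θ (k:ℤ)).eval x) ^ 2
        + 2 * φh.eval x * (θ (k:ℤ)).eval x * (φ (k:ℤ)).eval x
        - (θ ((q:ℤ) + 1)).eval x * ((φ (k:ℤ)).eval x) ^ 2))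
    (μ : ℝ) (hΔμ : (Δl.eval μ) ^ 2 = 1) (hφqμ : (φ (q:ℤ)).eval μ = 0) :
    J1 μ = (θ ((q:ℤ) + 1)).eval μ / a 0
      * ∑ k ∈ Finset.Icc 1 p, v (k : ℤ) * ((φ (k:ℤ)).eval μ) ^ 2 := by
  have ha0 : a 0 ≠ 0 := (ha_pos 0).ne'
  have hWq : a 0 * ((θ q).eval μ * (φ (q + 1)).eval μ - (θ (q + 1)).eval μ * (φ q).eval μ)
      = a 0 := by
    have h := congrArg (eval μ)
      (casoratian_eq_casoratian_zero (a := fun n ↦ C (a n)) hθ_rec hφ_rec q)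
    simpa [casoratian, hθ0, hθ1, hφ0, hφ1, ← ha_per 0] using h
  have hθφ : (θ q).eval μ * (φ (q + 1)).eval μ = 1 := by
    simpa [hφqμ, ha0] using hWq
  have hφhμ : φh.eval μ = 0 := by
    have hsq : Δl.eval μ ^ 2 - φh.eval μ ^ 2 = (θ q).eval μ * (φ (q + 1)).eval μ := by
      simp only [hΔl, hφh, eval_mul, eval_add, eval_sub, eval_C]
      ring
    nlinarith [sq_nonneg (φh.eval μ)]
  rw [hJ1, hφqμ, hφhμ, Finset.sum_range_eq_add_Ico _ p.succ_pos, Nat.succ_eq_add_one,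
    Finset.Ico_add_one_right_eq_Icc]
  simp only [Nat.cast_zero, hφ0, eval_zero, zero_mul, mul_zero, zero_add, zero_sub,
    zero_pow two_ne_zero, neg_zero, Finset.mul_sum]
  exact Finset.sum_congr rfl fun k _ ↦ by ring

theorem stmt18
    (q : ℕ) (hq : 1 ≤ q)
    (a b : ℤ → ℝ)
    (ha_per : ∀ n : ℤ, a (n + (q : ℤ)) = a n)
    (hb_per : ∀ n : ℤ, b (n + (q : ℤ)) = b n)
    (ha_pos : ∀ n : ℤ, 0 < a n)
    (θ φ : ℤ → Polynomial ℝ)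
    (hθ_rec : ∀ n : ℤ,
      C (a (n - 1)) * θ (n - 1) + C (a n) * θ (n + 1) + C (b n) * θ n = X * θ n)
    (hφ_rec : ∀ n : ℤ,
      C (a (n - 1)) * φ (n - 1) + C (a n) * φ (n + 1) + C (b n) * φ n = X * φ n)
    (hθ0 : θ 0 = 1) (hθ1 : θ 1 = 0) (hφ0 : φ 0 = 0) (hφ1 : φ 1 = 1)
    (Δl : Polynomial ℝ) (hΔl : Δl = C ((2:ℝ)⁻¹) * (φ ((q:ℤ) + 1) + θ (q:ℤ)))
    (φh : Polynomial ℝ) (hφh : φh = C ((2:ℝ)⁻¹) * (φ ((q:ℤ) + 1) - θ (q:ℤ)))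
    (p : ℕ) (hp : 1 ≤ p)
    (v : ℤ → ℝ)
    (hv_supp : ∀ n : ℤ, (n < 0 ∨ (p:ℤ) < n) → v n = 0)
    (hv0 : v 0 ≠ 0) (hvp : v (p:ℤ) ≠ 0)
    (J1 : ℝ → ℝ)
    (hJ1 : ∀ x : ℝ, J1 x = -(1 / a 0) * ∑ k ∈ Finset.range (p + 1), v (k : ℤ) *
      ((φ (q:ℤ)).eval x * ((θ (k:ℤ)).eval x) ^ 2
        + 2 * φh.eval x * (θ (k:ℤ)).eval x * (φ (k:ℤ)).eval x
        - (θ ((q:ℤ) + 1)).eval x * ((φ (k:ℤ)).eval x) ^ 2))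
    (μ : ℝ) (hΔμ : (Δl.eval μ) ^ 2 = 1) (hφqμ : (φ (q:ℤ)).eval μ = 0) :
    J1 μ = (θ ((q:ℤ) + 1)).eval μ / a 0
      * ∑ k ∈ Finset.Icc 1 p, v (k : ℤ) * ((φ (k:ℤ)).eval μ) ^ 2 :=
  stmt18_general q a b ha_per ha_pos θ φ hθ_rec hφ_rec hθ0 hθ1 hφ0 hφ1 Δl hΔl φh hφh p v J1 hJ1 μ
    hΔμ hφqμ
end
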